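/- Let n ≥ 2 and r ≥ 1 be integers, let h : ℝ^(n−1) → ℂ be a non-constant harmonic function with respect to the Euclidean metric, let (a,b) ∈ ℂ² be non-zero, and define f_r : (0,∞) × ℝ^(n−1) → ℂ by f_r(t,x) = (a + b·t^(n−1))·(log t)^(r−1)·h(x). Then f_r is proper r-harmonic on the hyperbolic upper half-space: τ^r(f_r) vanishes identically on (0,∞) × ℝ^(n−1), while τ^(r−1)(f_r) does not vanish identically. -/

import Mathlib

/-- Second derivative of `g` at `x` along the direction `v`. -/
noncomputable def dir2 {E : Type*} [NormedAddCommGroup E] [NormedSpace ℝ E]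
    (g : E → ℂ) (x v : E) : ℂ :=
  deriv (deriv fun s : ℝ => g (x + s • v)) 0

/-- The Euclidean Laplacian on `ℝ^m`, as the sum of the second derivatives
along the standard coordinate directions. -/
noncomputable def lap {m : ℕ} (g : EuclideanSpace ℝ (Fin m) → ℂ)
    (x : EuclideanSpace ℝ (Fin m)) : ℂ :=
  ∑ i : Fin m, dir2 g x (EuclideanSpace.single i 1)

/-- A function `ℝ^m → ℂ` is harmonic (w.r.t. the Euclidean metric) if it is
smooth and its Euclidean Laplacian vanishes identically. -/
def Harmonic {m : ℕ} (h : EuclideanSpace ℝ (Fin m) → ℂ) : Prop :=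
  ContDiff ℝ (⊤ : ℕ∞) h ∧ ∀ x, lap h x = 0

/-- The Laplace–Beltrami operator of the hyperbolic upper half-space
`H^n = (0,∞) × ℝ^(n−1)`:
`τ(f)(t,x) = t²·Δₓf(t,x) + t²·∂²f/∂t²(t,x) − (n−2)·t·∂f/∂t(t,x)`. -/
noncomputable def hypTau (n : ℕ)
    (f : ℝ × EuclideanSpace ℝ (Fin (n - 1)) → ℂ) :
    ℝ × EuclideanSpace ℝ (Fin (n - 1)) → ℂ := fun q =>
  (q.1 : ℂ) ^ 2 * lap (fun x => f (q.1, x)) q.2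
    + (q.1 : ℂ) ^ 2 * deriv (deriv fun s : ℝ => f (s, q.2)) q.1
    - ((n : ℂ) - 2) * (q.1 : ℂ) * deriv (fun s : ℝ => f (s, q.2)) q.1


open Polynomial

/-- One-dimensional radial operator. -/
noncomputable def Lop (n : ℕ) (φ : ℝ → ℂ) : ℝ → ℂ := fun t =>
  (t : ℂ) ^ 2 * deriv (deriv φ) t - ((n : ℂ) - 2) * (t : ℂ) * deriv φ t

noncomputable def Ffun (e : ℤ) (R : ℂ[X]) : ℝ → ℂ := fun t =>
  (t : ℂ) ^ e * R.eval ((Real.log t : ℂ))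

noncomputable def pstep (e : ℤ) (R : ℂ[X]) : ℂ[X] := C (e : ℂ) * R + R.derivative

noncomputable def Lmu (μ : ℂ) (P : ℂ[X]) : ℂ[X] :=
  P.derivative.derivative - C μ * P.derivative

lemma hasDerivAt_Ffun (e : ℤ) (R : ℂ[X]) {t : ℝ} (ht : 0 < t) :
    HasDerivAt (Ffun e R) (Ffun (e - 1) (pstep e R) t) t := by
  have htne : (t : ℂ) ≠ 0 := by exact_mod_cast ht.ne'
  have h1 : HasDerivAt (fun s : ℝ => (s : ℂ) ^ e) ((e : ℂ) * (t : ℂ) ^ (e - 1)) t :=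
    (hasDerivAt_zpow e (t : ℂ) (Or.inl htne)).comp_ofReal
  have hlog : HasDerivAt Real.log t⁻¹ t := Real.hasDerivAt_log ht.ne'
  have h2r : HasDerivAt (fun s : ℝ => R.eval ((s : ℂ)))
      (R.derivative.eval ((Real.log t : ℂ))) (Real.log t) :=
    (R.hasDerivAt ((Real.log t : ℂ))).comp_ofReal
  have h2 : HasDerivAt (fun s : ℝ => R.eval ((Real.log s : ℂ)))
      (t⁻¹ • R.derivative.eval ((Real.log t : ℂ))) t := h2r.scomp t hlog
  have := h1.mul h2
  convert this using 1
  · rfl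
  · rfl
  unfold Ffun pstep
  rw [zpow_sub_one₀ htne]
  simp only [eval_add, eval_mul, eval_C, smul_eq_mul, Complex.real_smul, Complex.ofReal_inv]
  field_simp

noncomputable def Tfun (a b : ℂ) (e₁ e₂ : ℤ) (P Q : ℂ[X]) : ℝ → ℂ := fun t =>
  a * Ffun e₁ P t + b * Ffun e₂ Q t

lemma hasDerivAt_Tfun (a b : ℂ) (e₁ e₂ : ℤ) (P Q : ℂ[X]) {t : ℝ} (ht : 0 < t) :
    HasDerivAt (Tfun a b e₁ e₂ P Q)
      (Tfun a b (e₁ - 1) (e₂ - 1) (pstep e₁ P) (pstep e₂ Q) t) t :=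
  ((hasDerivAt_Ffun e₁ P ht).const_mul a).add ((hasDerivAt_Ffun e₂ Q ht).const_mul b)

lemma deriv_Tfun (a b : ℂ) (e₁ e₂ : ℤ) (P Q : ℂ[X]) {t : ℝ} (ht : 0 < t) :
    deriv (Tfun a b e₁ e₂ P Q) t
      = Tfun a b (e₁ - 1) (e₂ - 1) (pstep e₁ P) (pstep e₂ Q) t :=
  (hasDerivAt_Tfun a b e₁ e₂ P Q ht).deriv

lemma deriv2_Tfun (a b : ℂ) (e₁ e₂ : ℤ) (P Q : ℂ[X]) {t : ℝ} (ht : 0 < t) :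
    deriv (deriv (Tfun a b e₁ e₂ P Q)) t
      = Tfun a b (e₁ - 1 - 1) (e₂ - 1 - 1) (pstep (e₁-1) (pstep e₁ P)) (pstep (e₂-1) (pstep e₂ Q)) t := by
  have hev : deriv (Tfun a b e₁ e₂ P Q) =ᶠ[nhds t]
      Tfun a b (e₁ - 1) (e₂ - 1) (pstep e₁ P) (pstep e₂ Q) :=
    Filter.eventually_of_mem (Ioi_mem_nhds ht) fun s hs => deriv_Tfun a b e₁ e₂ P Q hs
  rw [hev.deriv_eq]
  exact deriv_Tfun a b _ _ _ _ ht

lemma Lop_Tfun (n : ℕ) (hn : 2 ≤ n) (a b : ℂ) (P Q : ℂ[X]) {t : ℝ} (ht : 0 < t) :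
    Lop n (Tfun a b 0 (n - 1 : ℕ) P Q) t
      = Tfun a b 0 (n - 1 : ℕ) (Lmu ((n : ℂ) - 1) P) (Lmu (1 - (n : ℂ)) Q) t := by
  have htne : (t : ℂ) ≠ 0 := by exact_mod_cast ht.ne'
  have hm : ((n - 1 : ℕ) : ℂ) = (n : ℂ) - 1 := by
    push_cast [Nat.cast_sub (by omega : 1 ≤ n)]; ring
  unfold Lop
  rw [deriv2_Tfun a b _ _ P Q ht, deriv_Tfun a b _ _ P Q ht]
  unfold Tfun Ffun pstep Lmu
  simp only [eval_add, eval_mul, eval_C, eval_sub, derivative_add, derivative_mul,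
    derivative_C, zero_mul, zero_add, map_sub, map_add]
  push_cast
  rw [hm]
  simp only [zpow_sub₀ htne, zpow_neg, zpow_zero, zpow_one, zpow_natCast, zpow_two, zpow_ofNat]
  field_simp
  ring
section Part2
open Polynomial

variable {n : ℕ}

lemma lap_const_mul (h : EuclideanSpace ℝ (Fin (n-1)) → ℂ) (c : ℂ) (x) :
    lap (fun y => c * h y) x = c * lap h x := by
  unfold lap dir2
  rw [Finset.mul_sum]
  refine Finset.sum_congr rfl fun i _ => ?_
  have h1 : (deriv fun s : ℝ => c * h (x + s • EuclideanSpace.single i 1))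
      = fun s => c * deriv (fun s' => h (x + s' • EuclideanSpace.single i 1)) s := by
    funext s; exact deriv_const_mul_field c
  rw [h1, deriv_const_mul_field]

lemma hypTau_prod (h : EuclideanSpace ℝ (Fin (n-1)) → ℂ)
    (hlap : ∀ x, lap h x = 0) (φ : ℝ → ℂ) :
    hypTau n (fun q => φ q.1 * h q.2) = fun q => Lop n φ q.1 * h q.2 := by
  funext q
  have hl : lap (fun x => φ q.1 * h x) q.2 = 0 := by
    rw [lap_const_mul, hlap, mul_zero]
  have hts : (deriv fun s : ℝ => φ s * h q.2) = fun s => deriv φ s * h q.2 := by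
    funext s; exact deriv_mul_const_field _
  have ht2 : (deriv fun s : ℝ => deriv φ s * h q.2) q.1
      = deriv (deriv φ) q.1 * h q.2 := deriv_mul_const_field _
  unfold hypTau Lop
  rw [hl, hts, ht2]
  have ht1 : (fun s : ℝ => deriv φ s * h q.2) q.1 = deriv φ q.1 * h q.2 := rfl
  rw [ht1]; ring

lemma hypTau_iter_prod (h : EuclideanSpace ℝ (Fin (n-1)) → ℂ)
    (hlap : ∀ x, lap h x = 0) (φ : ℝ → ℂ) (j : ℕ) :
    (hypTau n)^[j] (fun q => φ q.1 * h q.2)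
      = fun q => ((Lop n)^[j] φ) q.1 * h q.2 := by
  induction j generalizing φ with
  | zero => rfl
  | succ k ih =>
      rw [Function.iterate_succ_apply, hypTau_prod h hlap φ, ih (Lop n φ),
        ← Function.iterate_succ_apply]

lemma Lop_congr {f g : ℝ → ℂ} (hfg : Set.EqOn f g (Set.Ioi 0)) {t : ℝ}
    (ht : t ∈ Set.Ioi (0:ℝ)) : Lop n f t = Lop n g t := by
  have h1 : f =ᶠ[nhds t] g := Filter.eventually_of_mem (Ioi_mem_nhds ht) hfg
  have hd : Set.EqOn (deriv f) (deriv g) (Set.Ioi 0) := fun s hs =>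
    Filter.EventuallyEq.deriv_eq (Filter.eventually_of_mem (Ioi_mem_nhds hs) hfg)
  have h2 : deriv f =ᶠ[nhds t] deriv g :=
    Filter.eventually_of_mem (Ioi_mem_nhds ht) hd
  unfold Lop
  rw [h1.deriv_eq, h2.deriv_eq]

lemma Lmu_natDegree_le (μ : ℂ) (P : ℂ[X]) {k : ℕ} (hP : P.natDegree ≤ k + 1) :
    (Lmu μ P).natDegree ≤ k := by
  unfold Lmu
  refine le_trans (natDegree_sub_le _ _) (max_le ?_ ?_)
  · exact le_trans P.derivative.natDegree_derivative_le
      (by have := P.natDegree_derivative_le; omega)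
  · exact le_trans (natDegree_C_mul_le _ _) (by have := P.natDegree_derivative_le; omega)

lemma Lmu_iter (μ : ℂ) : ∀ (k : ℕ) (P : ℂ[X]), P.natDegree ≤ k →
    (Lmu μ)^[k] P = C ((-μ)^k * (Nat.factorial k) * P.coeff k) := by
  intro k
  induction k with
  | zero =>
      intro P hP
      rw [Function.iterate_zero_apply]
      conv_lhs => rw [Polynomial.eq_C_of_natDegree_le_zero hP]
      simp
  | succ k ih =>
      intro P hP
      rw [Function.iterate_succ_apply, ih _ (Lmu_natDegree_le μ P hP)]
      have hc : (Lmu μ P).coeff k = -μ * (k+1) * P.coeff (k+1) := by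
        unfold Lmu
        have h2 : P.coeff (k + 2) = 0 :=
          coeff_eq_zero_of_natDegree_lt (by omega)
        simp [coeff_derivative, h2]
        ring
      rw [hc, Nat.factorial_succ]
      push_cast
      ring_nf

end Part2
/-- For `n ≥ 2`, `r ≥ 1`, a non-constant Euclidean-harmonic
`h : ℝ^(n−1) → ℂ` and non-zero `(a,b) ∈ ℂ²`, the function
`f_r(t,x) = (a + b·t^(n−1))·(log t)^(r−1)·h(x)` is proper `r`-harmonic on the
hyperbolic upper half-space: `τ^r(f_r)` vanishes identically on
`(0,∞) × ℝ^(n−1)` while `τ^(r−1)(f_r)` does not. -/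
theorem proper_r_harmonic_upper_half_space (n r : ℕ) (hn : 2 ≤ n) (hr : 1 ≤ r)
    (h : EuclideanSpace ℝ (Fin (n - 1)) → ℂ) (hh : Harmonic h)
    (hnc : ¬∃ c : ℂ, ∀ x, h x = c)
    (a b : ℂ) (hab : (a, b) ≠ (0, 0)) :
    (∀ t ∈ Set.Ioi (0 : ℝ), ∀ x,
        (hypTau n)^[r]
          (fun q => (a + b * (q.1 : ℂ) ^ (n - 1)) *
            (Real.log q.1 : ℂ) ^ (r - 1) * h q.2) (t, x) = 0) ∧
      ∃ t ∈ Set.Ioi (0 : ℝ), ∃ x,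
        (hypTau n)^[r - 1]
          (fun q => (a + b * (q.1 : ℂ) ^ (n - 1)) *
            (Real.log q.1 : ℂ) ^ (r - 1) * h q.2) (t, x) ≠ 0 := by
  classical
  obtain ⟨-, hlap⟩ := hh
  push_neg at hnc
  obtain ⟨x₀, hx₀⟩ := hnc 0
  have hμ : (n : ℂ) - 1 ≠ 0 := by
    intro hc
    have h1 : (n : ℂ) = ((1 : ℕ) : ℂ) := by push_cast; linear_combination hc
    have h2 := Nat.cast_inj (R := ℂ) |>.mp h1
    omega
  set φ₀ : ℝ → ℂ :=
    fun t => (a + b * (t : ℂ) ^ (n - 1)) * (Real.log t : ℂ) ^ (r - 1) with hφ₀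
  set P₀ : Polynomial ℂ := Polynomial.X ^ (r - 1) with hP₀
  have hEq : ∀ j, Set.EqOn ((Lop n)^[j] φ₀)
      (Tfun a b 0 ((n - 1 : ℕ) : ℤ)
        ((Lmu ((n : ℂ) - 1))^[j] P₀) ((Lmu (1 - (n : ℂ)))^[j] P₀)) (Set.Ioi 0) := by
    intro j
    induction j with
    | zero =>
        intro t ht
        simp only [Function.iterate_zero_apply]
        simp only [hφ₀, hP₀, Tfun, Ffun, zpow_natCast, zpow_zero,
          Polynomial.eval_pow, Polynomial.eval_X]
        ring
    | succ k ih =>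
        intro t ht
        rw [Function.iterate_succ_apply', Lop_congr ih ht, Lop_Tfun n hn a b _ _ ht,
          Function.iterate_succ_apply', Function.iterate_succ_apply']
  have hiter : ∀ j, (hypTau n)^[j]
      (fun q : ℝ × EuclideanSpace ℝ (Fin (n - 1)) =>
        (a + b * (q.1 : ℂ) ^ (n - 1)) * (Real.log q.1 : ℂ) ^ (r - 1) * h q.2)
      = fun q => ((Lop n)^[j] φ₀) q.1 * h q.2 :=
    fun j => hypTau_iter_prod h hlap φ₀ j
  have hdeg : P₀.natDegree ≤ r - 1 := by simp [hP₀]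
  have hcoeff : P₀.coeff (r - 1) = 1 := by simp [hP₀, Polynomial.coeff_X_pow]
  have hA := Lmu_iter ((n : ℂ) - 1) (r - 1) P₀ hdeg
  have hB := Lmu_iter (1 - (n : ℂ)) (r - 1) P₀ hdeg
  rw [hcoeff, mul_one] at hA hB
  set cA := (-((n : ℂ) - 1)) ^ (r - 1) * ((r - 1).factorial : ℂ) with hcAdef
  set cB := (-(1 - (n : ℂ))) ^ (r - 1) * ((r - 1).factorial : ℂ) with hcBdef
  have hcA : cA ≠ 0 := mul_ne_zero (pow_ne_zero _ (neg_ne_zero.mpr hμ))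
    (Nat.cast_ne_zero.mpr (Nat.factorial_ne_zero _))
  have hcB : cB ≠ 0 := mul_ne_zero (pow_ne_zero _
      (show -(1 - (n : ℂ)) ≠ 0 by rw [neg_sub]; exact hμ))
    (Nat.cast_ne_zero.mpr (Nat.factorial_ne_zero _))
  constructor
  · intro t ht x
    have hPA : (Lmu ((n : ℂ) - 1))^[r] P₀ = 0 := by
      have hrr : r = (r - 1) + 1 := by omega
      rw [hrr, Function.iterate_succ_apply', hA]
      simp [Lmu]
    have hPB : (Lmu (1 - (n : ℂ)))^[r] P₀ = 0 := by
      have hrr : r = (r - 1) + 1 := by omega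
      rw [hrr, Function.iterate_succ_apply', hB]
      simp [Lmu]
    rw [hiter r]
    show ((Lop n)^[r] φ₀) t * h x = 0
    rw [hEq r ht, hPA, hPB]
    simp [Tfun, Ffun]
  · have hval : ∀ t : ℝ, 0 < t → ∀ x,
        (hypTau n)^[r - 1]
          (fun q : ℝ × EuclideanSpace ℝ (Fin (n - 1)) =>
            (a + b * (q.1 : ℂ) ^ (n - 1)) * (Real.log q.1 : ℂ) ^ (r - 1) * h q.2) (t, x)
          = (a * cA + b * (t : ℂ) ^ (n - 1) * cB) * h x := by
      intro t ht x
      rw [hiter (r - 1)]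
      show ((Lop n)^[r - 1] φ₀) t * h x = _
      rw [hEq (r - 1) ht, hA, hB]
      simp only [Tfun, Ffun, zpow_natCast, zpow_zero, Polynomial.eval_C]
      ring
    by_cases hone : a * cA + b * cB = 0
    · refine ⟨2, by norm_num, x₀, ?_⟩
      rw [hval 2 (by norm_num) x₀]
      refine mul_ne_zero ?_ hx₀
      have hb : b * cB ≠ 0 := by
        intro hbc
        have ha : a * cA = 0 := by linear_combination hone - hbc
        have ha' : a = 0 := by
          rcases mul_eq_zero.mp ha with h' | h'
          · exact h'
          · exact absurd h' hcA
        have hb' : b = 0 := by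
          rcases mul_eq_zero.mp hbc with h' | h'
          · exact h'
          · exact absurd h' hcB
        exact hab (by rw [ha', hb'])
      have h2 : ((2 : ℝ) : ℂ) ^ (n - 1) ≠ 1 := by
        intro hc
        have hc' : ((2 ^ (n - 1) : ℕ) : ℂ) = ((1 : ℕ) : ℂ) := by push_cast; push_cast at hc; linear_combination hc
        have hc2 := Nat.cast_inj (R := ℂ) |>.mp hc'
        have hlt : 1 < 2 ^ (n - 1) := Nat.one_lt_two_pow_iff.mpr (by omega)
        omega
      intro hzero
      have hsplit : b * cB * (((2 : ℝ) : ℂ) ^ (n - 1) - 1) = 0 := by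
        linear_combination hzero - hone
      rcases mul_eq_zero.mp hsplit with h' | h'
      · exact hb h'
      · exact h2 (by linear_combination h')
    · refine ⟨1, by norm_num, x₀, ?_⟩
      rw [hval 1 one_pos x₀]
      refine mul_ne_zero ?_ hx₀
      simpa using hone
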